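/- Let k ≥ 3, q ∈ [0,1), u0 = q·2^{−k}, r > 0, and let γ0, η0 ∈ (0,1) satisfy the defining equations. Then for every x with 0 < x ≤ 1/2, G_r(1/2 + x) > G_r(1/2 − x). -/

import Mathlib

open Finset Filter Real

noncomputable section

/-- `f(α,γ,η)` from eq. (7) of the paper (with the given `u₀`). -/
def ff (k : ℕ) (u0 α γ η : ℝ) : ℝ :=
  η ^ (-(2*u0)) *
    ((α * ((γ^2 + (γ^2)⁻¹)/2) + 1 - α)^k
      - 2*(1-η) * ((α * (γ^2)⁻¹ + (1-α))/2)^k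
      + (1-η)^2 * (α * (γ^2)⁻¹/2)^k)

/-- `g_r(α,γ,η) = f(α,γ,η)^r / (α^α (1−α)^{1−α})`, with `0^0 = 1`
(automatic for `Real.rpow`). -/
def gg (k : ℕ) (u0 r α γ η : ℝ) : ℝ :=
  ff k u0 α γ η ^ r / (α ^ α * (1-α) ^ (1-α))

/-- `G_r(α)`: equals `g_r(α,γ₀,η₀)` for `α ∈ [3 ln k/k, 1 − 3 ln k/k]`, and
`g_r(α,√γ₀,√η₀)` otherwise. -/
def G (k : ℕ) (u0 r γ0 η0 α : ℝ) : ℝ :=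
  if 3 * Real.log k / k ≤ α ∧ α ≤ 1 - 3 * Real.log k / k then
    gg k u0 r α γ0 η0
  else
    gg k u0 r α (Real.sqrt γ0) (Real.sqrt η0)

/-- `φ(q) = (1 − √q)²/(1 − q + q ln q)`. -/
def phiQ (q : ℝ) : ℝ := (1 - Real.sqrt q)^2 / (1 - q + q * Real.log q)

/-- `t_k = (2^k ln 2/(1 − q + q ln q)) (1 − 20 k 2^{−k φ(q)})`. -/
def tk (k : ℕ) (q : ℝ) : ℝ :=
  (2^k * Real.log 2 / (1 - q + q * Real.log q)) *
    (1 - 20 * k * (2:ℝ) ^ (-((k:ℝ) * phiQ q)))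

/-! ### Auxiliary definitions for the proof -/

/-- The linear factor `A(α) = α (t + t⁻¹)/2 + 1 − α` where `t = γ²`. -/
def Abr (t α : ℝ) : ℝ := α * ((t + t⁻¹)/2) + 1 - α

/-- The linear factor `B(α) = (α t⁻¹ + (1 − α))/2`. -/
def Bbr (t α : ℝ) : ℝ := (α * t⁻¹ + (1 - α))/2

/-- The linear factor `C(α) = α t⁻¹/2`. -/
def Cbr (t α : ℝ) : ℝ := α * t⁻¹/2

/-- The bracket of `ff`: `A^k − 2e B^k + e² C^k` with `e = 1 − η`. -/
def Fb (k : ℕ) (t e α : ℝ) : ℝ :=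
  (Abr t α)^k - 2*e*(Bbr t α)^k + e^2*(Cbr t α)^k

/-- The derivative of `Fb` in `α`. -/
def Fd (k : ℕ) (t e α : ℝ) : ℝ :=
  (k:ℝ) * (Abr t α)^(k-1) * ((t + t⁻¹)/2 - 1)
    - 2*e*((k:ℝ) * (Bbr t α)^(k-1) * ((t⁻¹ - 1)/2))
    + e^2*((k:ℝ) * (Cbr t α)^(k-1) * (t⁻¹/2))

lemma ff_eq_Fb (k : ℕ) (u0 α γ η : ℝ) :
    ff k u0 α γ η = η ^ (-(2*u0)) * Fb k (γ^2) (1-η) α := rfl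

lemma hasDerivAt_Fb (k : ℕ) (t e α : ℝ) :
    HasDerivAt (fun α => Fb k t e α) (Fd k t e α) α := by
  have hA : HasDerivAt (fun α : ℝ => Abr t α) ((t + t⁻¹)/2 - 1) α := by
    have h := (((hasDerivAt_id α).mul_const ((t + t⁻¹)/2)).add_const 1).sub (hasDerivAt_id α)
    convert (show HasDerivAt (fun α : ℝ => Abr t α) _ α from h) using 1
    ring
  have hB : HasDerivAt (fun α : ℝ => Bbr t α) ((t⁻¹ - 1)/2) α := by
    have h := (((hasDerivAt_id α).mul_const t⁻¹).add
      ((hasDerivAt_const α (1:ℝ)).sub (hasDerivAt_id α))).div_const 2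
    convert (show HasDerivAt (fun α : ℝ => Bbr t α) _ α from h) using 1
    ring
  have hC : HasDerivAt (fun α : ℝ => Cbr t α) (t⁻¹/2) α := by
    have h := ((hasDerivAt_id α).mul_const t⁻¹).div_const 2
    convert (show HasDerivAt (fun α : ℝ => Cbr t α) _ α from h) using 1
    ring
  exact ((hA.pow k).sub ((hB.pow k).const_mul (2*e))).add ((hC.pow k).const_mul (e^2))

/-- Bernoulli-type bound: `(2 + (m+2) y)² ≤ 4 (1+y)^(m+2)` for `y ≥ −1` on the
relevant range. -/
lemma quad_aux (m : ℕ) (y : ℝ) (h1 : -1 ≤ y) :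
    0 ≤ 2 + ((m:ℝ)+2)*y → (2 + ((m:ℝ)+2)*y)^2 ≤ 4*(1+y)^(m+2) := by
  induction m using Nat.twoStepInduction with
  | zero =>
    intro _
    push_cast
    nlinarith [sq_nonneg (1+y)]
  | one =>
    intro h2
    push_cast at h2 ⊢
    nlinarith [sq_nonneg y, mul_nonneg (sq_nonneg y) h2]
  | more m ih _ =>
    intro h2
    push_cast at h2 ⊢
    have hy' : 0 ≤ 2 + ((m:ℝ)+2)*y := by
      rcases le_or_gt 0 y with h | h
      · nlinarith
      · nlinarith
    have ih' := ih hy'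
    have hd : 0 ≤ ((m:ℝ)+2)*y^2 := by positivity
    calc (2 + ((m:ℝ)+2+2)*y)^2
        ≤ ((2 + ((m:ℝ)+2)*y)*(1+y))^2 := by
          have hb' : (2+((m:ℝ)+2)*y)*(1+y) = 2+((m:ℝ)+4)*y + ((m:ℝ)+2)*y^2 := by ring
          nlinarith [hd, h2, hb', mul_nonneg hd h2, sq_nonneg (((m:ℝ)+2)*y^2)]
      _ = (2 + ((m:ℝ)+2)*y)^2 * (1+y)^2 := by ring
      _ ≤ (4*(1+y)^(m+2)) * (1+y)^2 := by
          exact mul_le_mul_of_nonneg_right ih' (sq_nonneg _)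
      _ = 4*(1+y)^(m+2+2) := by ring

/-- Lower bound on `√((b²+ρ)^(m+2))`. -/
lemma sqrt_pow_ge (m : ℕ) (b ρ : ℝ) (hb : 0 < b) (h : 0 ≤ b^2 + ρ) :
    b^(m+2) + ((m:ℝ)+2)/2 * b^m * ρ ≤ Real.sqrt ((b^2+ρ)^(m+2)) := by
  rcases le_or_gt (b^(m+2) + ((m:ℝ)+2)/2 * b^m * ρ) 0 with h0 | h0
  · exact h0.trans (Real.sqrt_nonneg _)
  · rw [Real.le_sqrt h0.le (by positivity)]
    have hb2 : (0:ℝ) < b^2 := by positivity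
    have hy1 : (-1:ℝ) ≤ ρ/b^2 := by
      rw [le_div_iff₀ hb2]
      linarith
    have hy2 : 0 ≤ 2 + ((m:ℝ)+2)*(ρ/b^2) := by
      have hbm : (0:ℝ) < b^m := by positivity
      have hfac : b^(m+2) + ((m:ℝ)+2)/2 * b^m * ρ = b^m * (b^2 + ((m:ℝ)+2)/2 * ρ) := by
        ring
      have h3 : 0 < b^2 + ((m:ℝ)+2)/2 * ρ := by
        rcases le_or_gt (b^2 + ((m:ℝ)+2)/2 * ρ) 0 with hco | hco
        · have hneg : b^m * (b^2 + ((m:ℝ)+2)/2 * ρ) ≤ 0 := by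
            have := mul_le_mul_of_nonneg_left hco hbm.le
            simpa using this
          linarith
        · exact hco
      have h4 := div_pos h3 hb2
      have e3 : (b^2 + ((m:ℝ)+2)/2*ρ)/b^2 = 1 + ((m:ℝ)+2)/2*(ρ/b^2) := by
        field_simp
      rw [e3] at h4
      linarith
    have hq := quad_aux m (ρ/b^2) hy1 hy2
    have e1 : (b^(m+2) + ((m:ℝ)+2)/2*b^m*ρ)^2
        = (b^2)^(m+2) * (2 + ((m:ℝ)+2)*(ρ/b^2))^2 / 4 := by
      field_simp
      ring
    have e2 : (b^2+ρ)^(m+2) = (b^2)^(m+2) * (1 + ρ/b^2)^(m+2) := by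
      rw [← mul_pow]
      congr 1
      field_simp
    rw [e1, e2]
    have hP : (0:ℝ) ≤ (b^2)^(m+2) := by positivity
    calc (b^2)^(m+2) * (2 + ((m:ℝ)+2)*(ρ/b^2))^2 / 4
        ≤ (b^2)^(m+2) * (4*(1 + ρ/b^2)^(m+2)) / 4 := by
          apply div_le_div_of_nonneg_right ?_ (by norm_num)
          exact mul_le_mul_of_nonneg_left hq hP
      _ = (b^2)^(m+2) * (1 + ρ/b^2)^(m+2) := by ring

lemma ABC_id (t : ℝ) (ht : t ≠ 0) (a : ℝ) :
    Abr t a * Cbr t a = (Bbr t a)^2 + (2*a-1)/4 := by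
  unfold Abr Bbr Cbr
  field_simp
  ring

lemma Abr_ge_one (t : ℝ) (ht0 : 0 < t) (a : ℝ) (ha : 0 ≤ a) : 1 ≤ Abr t a := by
  unfold Abr
  have hid : t + t⁻¹ - 2 = (1-t)^2 * t⁻¹ := by field_simp; ring
  have h2 : 2 ≤ t + t⁻¹ := by
    have h3 := mul_nonneg (sq_nonneg (1-t)) (inv_pos.2 ht0).le
    linarith
  have h4 := mul_le_mul_of_nonneg_left (show (1:ℝ) ≤ (t+t⁻¹)/2 by linarith) ha
  simp only [mul_one] at h4
  linarith

lemma Bbr_ge_half (t : ℝ) (ht0 : 0 < t) (ht1 : t ≤ 1) (a : ℝ) (ha : 0 ≤ a) :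
    1/2 ≤ Bbr t a := by
  unfold Bbr
  have hg : 1 ≤ t⁻¹ := by
    rw [show t⁻¹ = 1/t by ring]
    exact (one_le_div ht0).2 ht1
  have h4 := mul_le_mul_of_nonneg_left hg ha
  simp only [mul_one] at h4
  linarith

lemma Cbr_nonneg (t : ℝ) (ht0 : 0 < t) (a : ℝ) (ha : 0 ≤ a) : 0 ≤ Cbr t a := by
  unfold Cbr
  positivity

set_option maxHeartbeats 1000000 in
/-- Key pointwise positivity of the symmetrized derivative. -/
lemma Fd_pair_pos (k : ℕ) (hk : 3 ≤ k) (t e : ℝ) (ht0 : 0 < t) (ht1 : t < 1)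
    (he0 : 0 < e) (he1 : e < 1) (p : ℝ) (hp : 1/2 < p) (hp1 : p ≤ 1) :
    0 < Fd k t e p + Fd k t e (1-p) := by
  obtain ⟨m, rfl⟩ : ∃ m, k = m + 3 := ⟨k - 3, by omega⟩
  have hexp : m + 3 - 1 = m + 2 := rfl
  have htinv : (0:ℝ) < t⁻¹ := inv_pos.2 ht0
  have hg : 1 < t⁻¹ := by
    rw [show t⁻¹ = 1/t by ring]
    exact (one_lt_div ht0).2 ht1
  have hdA : (0:ℝ) < (t + t⁻¹)/2 - 1 := by
    have hid : (t + t⁻¹)/2 - 1 = (1-t)^2/(2*t) := by field_simp; ring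
    rw [hid]
    exact div_pos (pow_pos (by linarith : (0:ℝ) < 1-t) 2) (by linarith)
  have hdB : (0:ℝ) < (t⁻¹ - 1)/2 := by linarith
  have hdC : (0:ℝ) < t⁻¹/2 := by linarith
  set q : ℝ := 1 - p with hqdef
  have hq0 : 0 ≤ q := by simp only [hqdef]; linarith
  have hq1 : q ≤ 1 := by simp only [hqdef]; linarith
  have hp0 : (0:ℝ) ≤ p := by linarith
  -- basic positivity facts
  have hAp := Abr_ge_one t ht0 p hp0
  have hAq := Abr_ge_one t ht0 q hq0
  have hBp := Bbr_ge_half t ht0 ht1.le p hp0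
  have hBq := Bbr_ge_half t ht0 ht1.le q hq0
  have hCp := Cbr_nonneg t ht0 p hp0
  have hCq := Cbr_nonneg t ht0 q hq0
  have hBp0 : (0:ℝ) < Bbr t p := by linarith
  have hBq0 : (0:ℝ) < Bbr t q := by linarith
  -- abbreviations
  set dA : ℝ := (t + t⁻¹)/2 - 1 with hdAdef
  set dB : ℝ := (t⁻¹ - 1)/2 with hdBdef
  set dC : ℝ := t⁻¹/2 with hdCdef
  set Xp : ℝ := dA * (Abr t p)^(m+2) with hXpdef
  set Xq : ℝ := dA * (Abr t q)^(m+2) with hXqdef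
  set Yp : ℝ := e^2*dC * (Cbr t p)^(m+2) with hYpdef
  set Yq : ℝ := e^2*dC * (Cbr t q)^(m+2) with hYqdef
  have hXp0 : 0 ≤ Xp := mul_nonneg hdA.le (pow_nonneg (by linarith) _)
  have hXq0 : 0 ≤ Xq := mul_nonneg hdA.le (pow_nonneg (by linarith) _)
  have hYp0 : 0 ≤ Yp := mul_nonneg (by positivity) (pow_nonneg hCp _)
  have hYq0 : 0 ≤ Yq := mul_nonneg (by positivity) (pow_nonneg hCq _)
  set wp : ℝ := Real.sqrt ((Abr t p * Cbr t p)^(m+2)) with hwpdef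
  set wq : ℝ := Real.sqrt ((Abr t q * Cbr t q)^(m+2)) with hwqdef
  have hdd : dA * dC = dB^2 := by
    simp only [dA, dB, dC]
    field_simp
    ring
  -- sqrt product identities
  have hprod : ∀ a : ℝ, 0 ≤ Abr t a → 0 ≤ Cbr t a →
      Real.sqrt (dA * (Abr t a)^(m+2)) * Real.sqrt (e^2*dC * (Cbr t a)^(m+2))
        = e*dB*Real.sqrt ((Abr t a * Cbr t a)^(m+2)) := by
    intro a hA0 hC0
    rw [← Real.sqrt_mul (mul_nonneg hdA.le (pow_nonneg hA0 _))]
    have hid : dA * (Abr t a)^(m+2) * (e^2*dC * (Cbr t a)^(m+2))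
        = (e*dB)^2 * (Abr t a * Cbr t a)^(m+2) := by
      rw [mul_pow (Abr t a)]
      have : dA * (Abr t a)^(m+2) * (e^2*dC * (Cbr t a)^(m+2))
          = e^2*(dA*dC) * ((Abr t a)^(m+2) * (Cbr t a)^(m+2)) := by ring
      rw [this, hdd]
      ring
    rw [hid, Real.sqrt_mul (sq_nonneg _), Real.sqrt_sq (by positivity : (0:ℝ) ≤ e*dB)]
  have hXYp : Real.sqrt Xp * Real.sqrt Yp = e*dB*wp := hprod p (by linarith) hCp
  have hXYq : Real.sqrt Xq * Real.sqrt Yq = e*dB*wq := hprod q (by linarith) hCq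
  -- per-point identity T = (√X − √Y)² + 2 e dB (w − B^(m+2))
  have hTp : Xp + Yp - 2*e*dB*(Bbr t p)^(m+2)
      = (Real.sqrt Xp - Real.sqrt Yp)^2 + 2*e*dB*(wp - (Bbr t p)^(m+2)) := by
    have h1 : (Real.sqrt Xp - Real.sqrt Yp)^2
        = Xp - 2*(Real.sqrt Xp * Real.sqrt Yp) + Yp := by
      rw [sub_sq, Real.sq_sqrt hXp0, Real.sq_sqrt hYp0]
      ring
    rw [h1, hXYp]
    ring
  have hTq : Xq + Yq - 2*e*dB*(Bbr t q)^(m+2)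
      = (Real.sqrt Xq - Real.sqrt Yq)^2 + 2*e*dB*(wq - (Bbr t q)^(m+2)) := by
    have h1 : (Real.sqrt Xq - Real.sqrt Yq)^2
        = Xq - 2*(Real.sqrt Xq * Real.sqrt Yq) + Yq := by
      rw [sub_sq, Real.sq_sqrt hXq0, Real.sq_sqrt hYq0]
      ring
    rw [h1, hXYq]
    ring
  -- lower bound on w − B^(m+2)
  have hwplow : ((m:ℝ)+2)/2 * (Bbr t p)^m * ((2*p-1)/4) ≤ wp - (Bbr t p)^(m+2) := by
    have h1 : wp = Real.sqrt (((Bbr t p)^2 + (2*p-1)/4)^(m+2)) := by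
      rw [hwpdef, ABC_id t ht0.ne' p]
    have h2 := sqrt_pow_ge m (Bbr t p) ((2*p-1)/4) hBp0 (by
      rw [← ABC_id t ht0.ne' p]; exact mul_nonneg (by linarith) hCp)
    rw [← h1] at h2
    linarith
  have hwqlow : ((m:ℝ)+2)/2 * (Bbr t q)^m * ((2*q-1)/4) ≤ wq - (Bbr t q)^(m+2) := by
    have h1 : wq = Real.sqrt (((Bbr t q)^2 + (2*q-1)/4)^(m+2)) := by
      rw [hwqdef, ABC_id t ht0.ne' q]
    have h2 := sqrt_pow_ge m (Bbr t q) ((2*q-1)/4) hBq0 (by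
      rw [← ABC_id t ht0.ne' q]; exact mul_nonneg (by linarith) hCq)
    rw [← h1] at h2
    linarith
  -- sum of the correction terms is nonnegative
  have hsumcor : 0 ≤ ((m:ℝ)+2)/2 * (Bbr t p)^m * ((2*p-1)/4)
      + ((m:ℝ)+2)/2 * (Bbr t q)^m * ((2*q-1)/4) := by
    have hqq : (2*q-1)/4 = -((2*p-1)/4) := by simp only [hqdef]; ring
    rw [hqq]
    have hmono : (Bbr t q)^m ≤ (Bbr t p)^m := by
      apply pow_le_pow_left₀ (by linarith)
      simp only [Bbr, hqdef]
      have h7 := mul_le_mul_of_nonneg_right (show (1:ℝ)-p ≤ p by linarith)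
        (by linarith : (0:ℝ) ≤ t⁻¹ - 1)
      nlinarith [h7]
    have hrp : (0:ℝ) ≤ (2*p-1)/4 := by linarith
    have key := mul_le_mul_of_nonneg_right hmono hrp
    have hc : (0:ℝ) ≤ ((m:ℝ)+2)/2 := by positivity
    have hre : ((m:ℝ)+2)/2 * (Bbr t p)^m * ((2*p-1)/4)
        + ((m:ℝ)+2)/2 * (Bbr t q)^m * (-((2*p-1)/4))
        = ((m:ℝ)+2)/2 * ((Bbr t p)^m * ((2*p-1)/4) - (Bbr t q)^m * ((2*p-1)/4)) := by
      ring
    rw [hre]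
    exact mul_nonneg hc (by linarith)
  -- strict positivity of the AM-GM defects
  have hS : 0 < (Real.sqrt Xp - Real.sqrt Yp)^2 + (Real.sqrt Xq - Real.sqrt Yq)^2 := by
    have hbase : Xp = Yp → Xq = Yq → False := by
      intro hpe hqe
      have key : dA * (Abr t p * Cbr t q)^(m+2) = dA * (Abr t q * Cbr t p)^(m+2) := by
        calc dA * (Abr t p * Cbr t q)^(m+2)
            = (dA * (Abr t p)^(m+2)) * (Cbr t q)^(m+2) := by rw [mul_pow]; ring
          _ = (e^2*dC * (Cbr t p)^(m+2)) * (Cbr t q)^(m+2) := by rw [← hXpdef, hpe, hYpdef]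
          _ = (e^2*dC * (Cbr t q)^(m+2)) * (Cbr t p)^(m+2) := by ring
          _ = (dA * (Abr t q)^(m+2)) * (Cbr t p)^(m+2) := by rw [← hYqdef, ← hqe, hXqdef]
          _ = dA * (Abr t q * Cbr t p)^(m+2) := by rw [mul_pow]; ring
      have key2 : (Abr t p * Cbr t q)^(m+2) = (Abr t q * Cbr t p)^(m+2) :=
        mul_left_cancel₀ hdA.ne' key
      have hbase2 : Abr t p * Cbr t q = Abr t q * Cbr t p := by
        rcases lt_trichotomy (Abr t p * Cbr t q) (Abr t q * Cbr t p) with h | h | h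
        · exact absurd key2 (ne_of_lt (pow_lt_pow_left₀ h
            (mul_nonneg (by linarith) hCq) (by omega)))
        · exact h
        · exact absurd key2.symm (ne_of_lt (pow_lt_pow_left₀ h
            (mul_nonneg (by linarith) hCp) (by omega)))
      have hdiff : Abr t p * Cbr t q - Abr t q * Cbr t p = (t⁻¹/2) * (1 - 2*p) := by
        simp only [Abr, Cbr, hqdef]
        ring
      have hlt : (t⁻¹/2) * (1 - 2*p) < 0 :=
        mul_neg_of_pos_of_neg hdC (by linarith)
      rw [sub_eq_zero.mpr hbase2] at hdiff
      linarith [hdiff.symm ▸ hlt]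
    rcases eq_or_ne Xp Yp with hpe | hpe
    · have hne : Xq ≠ Yq := fun h => hbase hpe h
      have hsne : Real.sqrt Xq ≠ Real.sqrt Yq := fun h =>
        hne (by rw [← Real.sq_sqrt hXq0, h, Real.sq_sqrt hYq0])
      have h1 : 0 < (Real.sqrt Xq - Real.sqrt Yq)^2 :=
        lt_of_le_of_ne (sq_nonneg _) (Ne.symm (pow_ne_zero 2 (sub_ne_zero.2 hsne)))
      linarith [sq_nonneg (Real.sqrt Xp - Real.sqrt Yp)]
    · have hsne : Real.sqrt Xp ≠ Real.sqrt Yp := fun h =>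
        hpe (by rw [← Real.sq_sqrt hXp0, h, Real.sq_sqrt hYp0])
      have h1 : 0 < (Real.sqrt Xp - Real.sqrt Yp)^2 :=
        lt_of_le_of_ne (sq_nonneg _) (Ne.symm (pow_ne_zero 2 (sub_ne_zero.2 hsne)))
      linarith [sq_nonneg (Real.sqrt Xq - Real.sqrt Yq)]
  -- assemble
  have hedB : (0:ℝ) < e*dB := by positivity
  have hsum : Fd (m+3) t e p + Fd (m+3) t e q
      = ((m:ℝ)+3) * ((Xp + Yp - 2*e*dB*(Bbr t p)^(m+2))
        + (Xq + Yq - 2*e*dB*(Bbr t q)^(m+2))) := by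
    simp only [Fd, hexp, hXpdef, hXqdef, hYpdef, hYqdef, hdAdef, hdBdef, hdCdef]
    push_cast
    ring
  rw [hsum]
  have hbig : 0 < (Xp + Yp - 2*e*dB*(Bbr t p)^(m+2))
      + (Xq + Yq - 2*e*dB*(Bbr t q)^(m+2)) := by
    rw [hTp, hTq]
    have h1 := mul_le_mul_of_nonneg_left hwplow (by positivity : (0:ℝ) ≤ 2*e*dB)
    have h2 := mul_le_mul_of_nonneg_left hwqlow (by positivity : (0:ℝ) ≤ 2*e*dB)
    have h3 := mul_nonneg (by positivity : (0:ℝ) ≤ 2*e*dB) hsumcor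
    have h4 : 2*e*dB*(((m:ℝ)+2)/2 * (Bbr t p)^m * ((2*p-1)/4)
        + ((m:ℝ)+2)/2 * (Bbr t q)^m * ((2*q-1)/4))
        = 2*e*dB*(((m:ℝ)+2)/2 * (Bbr t p)^m * ((2*p-1)/4))
          + 2*e*dB*(((m:ℝ)+2)/2 * (Bbr t q)^m * ((2*q-1)/4)) := by ring
    rw [h4] at h3
    linarith [hS]
  have hk3 : (0:ℝ) < (m:ℝ)+3 := by positivity
  exact mul_pos hk3 hbig

/-- The key asymmetry of the bracket. -/
lemma Fb_lt (k : ℕ) (hk : 3 ≤ k) (t e : ℝ) (ht0 : 0 < t) (ht1 : t < 1)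
    (he0 : 0 < e) (he1 : e < 1) (x : ℝ) (hx : 0 < x) (hx2 : x ≤ 1/2) :
    Fb k t e (1/2 - x) < Fb k t e (1/2 + x) := by
  set D : ℝ → ℝ := fun s => Fb k t e (1/2 + s) - Fb k t e (1/2 - s) with hDdef
  have hD : ∀ s : ℝ, HasDerivAt D (Fd k t e (1/2+s) + Fd k t e (1/2-s)) s := by
    intro s
    have h1 : HasDerivAt (fun s : ℝ => 1/2 + s) 1 s := by
      simpa using (hasDerivAt_id s).const_add (1/2 : ℝ)
    have h2 : HasDerivAt (fun s : ℝ => 1/2 - s) (-1) s := by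
      simpa using (show HasDerivAt (fun s : ℝ => 1/2 - s) _ s from (hasDerivAt_const s ((1:ℝ)/2)).sub (hasDerivAt_id s))
    have hc1 := (hasDerivAt_Fb k t e (1/2+s)).comp s h1
    have hc2 := (hasDerivAt_Fb k t e (1/2-s)).comp s h2
    have := hc1.sub hc2
    simp only [Function.comp_def] at this
    convert (show HasDerivAt D _ s from this) using 1
    ring
  have hmono : StrictMonoOn D (Set.Icc 0 (1/2)) := by
    apply strictMonoOn_of_deriv_pos (convex_Icc 0 (1/2))
    · exact fun s _ => (hD s).continuousAt.continuousWithinAt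
    · intro s hs
      rw [interior_Icc] at hs
      rw [(hD s).deriv]
      have heq : (1:ℝ)/2 - s = 1 - (1/2 + s) := by ring
      rw [heq]
      exact Fd_pair_pos k hk t e ht0 ht1 he0 he1 (1/2+s) (by linarith [hs.1]) (by linarith [hs.2])
  have h0mem : (0:ℝ) ∈ Set.Icc (0:ℝ) (1/2) := by constructor <;> norm_num
  have hxmem : x ∈ Set.Icc (0:ℝ) (1/2) := ⟨hx.le, hx2⟩
  have := hmono h0mem hxmem hx
  have hD0 : D 0 = 0 := by simp [hDdef]
  rw [hD0] at this
  simpa [hDdef, sub_pos] using this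

/-- Nonnegativity of the bracket. -/
lemma Fb_nonneg (k : ℕ) (t e α : ℝ) (ht0 : 0 < t) (ht1 : t ≤ 1)
    (he0 : 0 ≤ e) (he1 : e ≤ 1) (ha0 : 0 ≤ α) (ha1 : α ≤ 1) :
    0 ≤ Fb k t e α := by
  have hA := Abr_ge_one t ht0 α ha0
  have hB := Bbr_ge_half t ht0 ht1 α ha0
  have hC := Cbr_nonneg t ht0 α ha0
  have hA0 : (0:ℝ) ≤ Abr t α := by linarith
  have hB0 : (0:ℝ) ≤ Bbr t α := by linarith
  have hCB : Cbr t α ≤ Bbr t α := by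
    simp only [Bbr, Cbr]
    linarith
  have h2B : 2 * Bbr t α ≤ Abr t α + Cbr t α := by
    have hid : Abr t α + Cbr t α - 2 * Bbr t α = α * t / 2 := by
      simp only [Abr, Bbr, Cbr]
      ring
    have h5 := mul_nonneg ha0 ht0.le
    linarith
  -- convexity: B^k ≤ (A^k + C^k)/2
  have hconv : (Bbr t α)^k ≤ ((Abr t α)^k + (Cbr t α)^k)/2 := by
    have hmid : (Bbr t α)^k ≤ ((Abr t α + Cbr t α)/2)^k := by
      apply pow_le_pow_left₀ hB0
      linarith
    have hcx := (convexOn_pow k).2 (Set.mem_Ici.mpr hA0) (Set.mem_Ici.mpr hC)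
      (by norm_num : (0:ℝ) ≤ 1/2) (by norm_num : (0:ℝ) ≤ 1/2) (by norm_num)
    simp only [smul_eq_mul] at hcx
    have : ((Abr t α + Cbr t α)/2)^k ≤ ((Abr t α)^k + (Cbr t α)^k)/2 := by
      calc ((Abr t α + Cbr t α)/2)^k = (1/2*Abr t α + 1/2*Cbr t α)^k := by ring_nf
        _ ≤ 1/2*(Abr t α)^k + 1/2*(Cbr t α)^k := hcx
        _ = ((Abr t α)^k + (Cbr t α)^k)/2 := by ring
    linarith
  have hCBk : (Cbr t α)^k ≤ (Bbr t α)^k := pow_le_pow_left₀ hC hCB k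
  have hdecomp : Fb k t e α
      = ((Abr t α)^k + (Cbr t α)^k - 2*(Bbr t α)^k)
        + (1-e)*(2*(Bbr t α)^k - (1+e)*(Cbr t α)^k) := by
    simp only [Fb]
    ring
  rw [hdecomp]
  have hterm2 : 0 ≤ (1-e)*(2*(Bbr t α)^k - (1+e)*(Cbr t α)^k) := by
    apply mul_nonneg (by linarith)
    have h6 := mul_nonneg (show (0:ℝ) ≤ 1-e by linarith) (pow_nonneg hC k)
    nlinarith [hCBk]
  linarith

/-- The main comparison at the level of `gg`. -/
lemma gg_lt (k : ℕ) (hk : 3 ≤ k) (u0 r γ η : ℝ) (hγ0 : 0 < γ) (hγ1 : γ < 1)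
    (hη0 : 0 < η) (hη1 : η < 1) (hr : 0 < r) (x : ℝ) (hx : 0 < x) (hx2 : x ≤ 1/2) :
    gg k u0 r (1/2 - x) γ η < gg k u0 r (1/2 + x) γ η := by
  have ht0 : (0:ℝ) < γ^2 := by positivity
  have ht1 : γ^2 < 1 := by nlinarith
  have he0 : (0:ℝ) < 1 - η := by linarith
  have he1 : 1 - η < 1 := by linarith
  have hrpowpos : (0:ℝ) < η ^ (-(2*u0)) := Real.rpow_pos_of_pos hη0 _
  have hfflt : ff k u0 (1/2 - x) γ η < ff k u0 (1/2 + x) γ η := by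
    rw [ff_eq_Fb, ff_eq_Fb]
    exact mul_lt_mul_of_pos_left
      (Fb_lt k hk (γ^2) (1-η) ht0 ht1 he0 he1 x hx hx2) hrpowpos
  have hff0 : 0 ≤ ff k u0 (1/2 - x) γ η := by
    rw [ff_eq_Fb]
    exact mul_nonneg hrpowpos.le
      (Fb_nonneg k (γ^2) (1-η) (1/2-x) ht0 ht1.le he0.le (by linarith) (by linarith) (by linarith))
  have hnum : ff k u0 (1/2-x) γ η ^ r < ff k u0 (1/2+x) γ η ^ r :=
    Real.rpow_lt_rpow hff0 hfflt hr
  unfold gg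
  have e1 : (1:ℝ) - (1/2 - x) = 1/2 + x := by ring
  have e2 : (1:ℝ) - (1/2 + x) = 1/2 - x := by ring
  rw [e1, e2]
  have hden1 : (0:ℝ) < ((1:ℝ)/2 - x) ^ ((1:ℝ)/2 - x) := by
    rcases eq_or_lt_of_le (show (0:ℝ) ≤ 1/2 - x by linarith) with h | h
    · rw [← h, Real.rpow_zero]
      norm_num
    · exact Real.rpow_pos_of_pos h _
  have hden2 : (0:ℝ) < ((1:ℝ)/2 + x) ^ ((1:ℝ)/2 + x) :=
    Real.rpow_pos_of_pos (by linarith) _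
  rw [show ((1:ℝ)/2 + x) ^ ((1:ℝ)/2 + x) * ((1:ℝ)/2 - x) ^ ((1:ℝ)/2 - x)
      = ((1:ℝ)/2 - x) ^ ((1:ℝ)/2 - x) * ((1:ℝ)/2 + x) ^ ((1:ℝ)/2 + x) from mul_comm _ _]
  exact (div_lt_div_iff_of_pos_right (mul_pos hden1 hden2)).2 hnum

/-- Lemma 8 of the paper: `G_r(1/2 + x) > G_r(1/2 − x)` for every `0 < x ≤ 1/2`. -/
theorem G_asymmetry (k : ℕ) (hk : 3 ≤ k) (q : ℝ) (hq0 : 0 ≤ q) (hq1 : q < 1)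
    (u0 γ0 η0 r : ℝ) (hu0 : u0 = q * ((2:ℝ)^k)⁻¹)
    (hγ0 : 0 < γ0) (hγ1 : γ0 < 1) (hη0 : 0 < η0) (hη1 : η0 < 1)
    (he1 : 1 - η0 = (1 - γ0^2) * (1 + γ0^2)^(k-1))
    (he2 : u0 = η0 / ((1 + γ0^2)^k - (1 - η0)))
    (hr : 0 < r) :
    ∀ x : ℝ, 0 < x → x ≤ 1/2 →
      G k u0 r γ0 η0 (1/2 - x) < G k u0 r γ0 η0 (1/2 + x) := by
  intro x hx hx2
  have hsym : (3 * Real.log k / k ≤ 1/2 - x ∧ 1/2 - x ≤ 1 - 3 * Real.log k / k)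
      ↔ (3 * Real.log k / k ≤ 1/2 + x ∧ 1/2 + x ≤ 1 - 3 * Real.log k / k) := by
    constructor <;> rintro ⟨h1, h2⟩ <;> exact ⟨by linarith, by linarith⟩
  unfold G
  by_cases hc : 3 * Real.log k / k ≤ 1/2 + x ∧ 1/2 + x ≤ 1 - 3 * Real.log k / k
  · rw [if_pos (hsym.mpr hc), if_pos hc]
    exact gg_lt k hk u0 r γ0 η0 hγ0 hγ1 hη0 hη1 hr x hx hx2
  · rw [if_neg (fun h => hc (hsym.mp h)), if_neg hc]
    have h1 : 0 < Real.sqrt γ0 := Real.sqrt_pos.2 hγ0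
    have h2 : Real.sqrt γ0 < 1 := by
      have := Real.sqrt_lt_sqrt hγ0.le hγ1
      rwa [Real.sqrt_one] at this
    have h3 : 0 < Real.sqrt η0 := Real.sqrt_pos.2 hη0
    have h4 : Real.sqrt η0 < 1 := by
      have := Real.sqrt_lt_sqrt hη0.le hη1
      rwa [Real.sqrt_one] at this
    exact gg_lt k hk u0 r (Real.sqrt γ0) (Real.sqrt η0) h1 h2 h3 h4 hr x hx hx2

end
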